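/- In Nim on graphs played on K_n with all edge weights 1 and starting vertex v_1, the first player can force play to stay within the SSB subgraph on v_1, v_2: by first moving to v_2 and thereafter always returning to v_1 or v_2, the first player ensures that all edges incident with v_1 and v_2 are eventually exhausted with the second player stuck; specifically, if n is even the second player is stranded at v_2, and if n is odd the second player is stranded at v_1. -/

import Mathlib

/-- A position of Nim on graphs: a symmetric non-negative integer weight
function on pairs of vertices (the weighted graph; weight-zero pairs are
non-edges) plus the location of the indicator piece. -/
structure NimPos (V : Type) where
  w : V → V → ℕ
  symm : ∀ u v, w u v = w v u
  pos : V

/-- A legal move: decrease the weight of an edge incident with the piece to a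
strictly smaller value and move the piece along it; all other weights stay. -/
def NimMove {V : Type} (p q : NimPos V) : Prop :=
  p.pos ≠ q.pos ∧
  q.w p.pos q.pos < p.w p.pos q.pos ∧
  ∀ u v, ¬((u = p.pos ∧ v = q.pos) ∨ (u = q.pos ∧ v = p.pos)) → q.w u v = p.w u v

/-- The player to move loses (the position is a 0-position): the opponent has
a winning strategy `f` answering every move. -/
inductive MoverLoses {V : Type} : NimPos V → Prop
  | intro (p : NimPos V) (f : ∀ q, NimMove p q → NimPos V)
      (hmove : ∀ q (h : NimMove p q), NimMove q (f q h))
      (hwin : ∀ q (h : NimMove p q), MoverLoses (f q h)) : MoverLoses p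

/-- The player to move wins (the position is a p-position). -/
def MoverWins {V : Type} (p : NimPos V) : Prop :=
  ∃ q, NimMove p q ∧ MoverLoses q

/-- Weights of the path on vertices `0,…,n` of `Fin (n+1)`: edge `i — i+1` has weight `ω i`. -/
def pathW (n : ℕ) (ω : ℕ → ℕ) (u v : Fin (n+1)) : ℕ :=
  if u.val + 1 = v.val then ω u.val
  else if v.val + 1 = u.val then ω v.val else 0

theorem pathW_symm (n : ℕ) (ω : ℕ → ℕ) : ∀ u v, pathW n ω u v = pathW n ω v u := by
  intro u v; unfold pathW; split_ifs <;> first | rfl | (exfalso; omega)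

/-- Weights of the cycle on `Fin m` (`m ≥ 3`): edge `i — (i+1) % m` has weight `ω i`. -/
def cycW (m : ℕ) (ω : ℕ → ℕ) (u v : Fin m) : ℕ :=
  (if (u.val + 1) % m = v.val then ω u.val else 0) +
  (if (v.val + 1) % m = u.val then ω v.val else 0)

theorem cycW_symm (m : ℕ) (ω : ℕ → ℕ) : ∀ u v, cycW m ω u v = cycW m ω v u :=
  fun _ _ => Nat.add_comm _ _

/-- Weight-1 complete bipartite graph `K_{2,j}`: part `{0,1}` and part `{2,…,j+1}`. -/
def k2W (j : ℕ) (u v : Fin (j+2)) : ℕ :=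
  if (u.val < 2 ∧ 2 ≤ v.val) ∨ (v.val < 2 ∧ 2 ≤ u.val) then 1 else 0

theorem k2W_symm (j : ℕ) : ∀ u v, k2W j u v = k2W j v u := by
  intro u v; unfold k2W; split_ifs <;> omega

/-- Weight-1 `SSB_j = K_{2,j} + e_{12}`: `K_{2,j}` plus the edge `0 — 1`. -/
def ssbW (j : ℕ) (u v : Fin (j+2)) : ℕ :=
  if ((u.val < 2 ∧ 2 ≤ v.val) ∨ (v.val < 2 ∧ 2 ≤ u.val)) ∨
      (u.val < 2 ∧ v.val < 2 ∧ u.val ≠ v.val) then 1 else 0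

theorem ssbW_symm (j : ℕ) : ∀ u v, ssbW j u v = ssbW j v u := by
  intro u v; unfold ssbW; split_ifs <;> omega

/-- Weight-1 complete graph `K_n`. -/
def knW (n : ℕ) (u v : Fin n) : ℕ := if u.val ≠ v.val then 1 else 0

theorem knW_symm (n : ℕ) : ∀ u v, knW n u v = knW n v u := by
  intro u v; unfold knW; split_ifs <;> omega

/-- Length of the maximal all-positive run of cycle edges clockwise from vertex `s`. -/
noncomputable def fwdLen (m : ℕ) (w : ℕ → ℕ) (s : ℕ) : ℕ :=
  sSup {d | d ≤ m ∧ ∀ i < d, 0 < w ((s + i) % m)}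

/-- Length of the maximal all-positive run of cycle edges counterclockwise from vertex `s`. -/
noncomputable def bwdLen (m : ℕ) (w : ℕ → ℕ) (s : ℕ) : ℕ :=
  sSup {d | d ≤ m ∧ ∀ i < d, 0 < w ((s + m - 1 - i) % m)}

/-- `ForcesVia S t p`: from position `p`, the player to move can always move
to a position whose piece lies in `S`, so that either the opponent is then
stuck at the vertex `t`, or every reply can again be answered this way. -/
inductive ForcesVia {V : Type} (S : V → Prop) (t : V) : NimPos V → Prop
  | step (p q : NimPos V) (hS : S q.pos) (hq : NimMove p q)
      (hstuck : (∀ r, ¬ NimMove q r) → q.pos = t)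
      (hcont : ∀ r, NimMove q r → ForcesVia S t r) : ForcesVia S t p

/-!
With unit weights a move deletes the edge it uses, so the game is edge geography on a simple
graph. Whenever the first player has just returned to `{a, b}`, the board is the complete graph
minus the edge `ab` and minus the edges joining `a`, `b` to the visited vertices. The second
player must step to an unvisited vertex `z`; its edge to the other one of `a`, `b` is intact, and
returning along it restores the same shape with `z` now visited. Each round uses up one of the
`n - 2` vertices outside `{a, b}` and alternates between `a` and `b`, which fixes where the second
player is finally stranded.
-/

variable {V : Type}

theorem NimPos.ext {p q : NimPos V} (hw : p.w = q.w) (hpos : p.pos = q.pos) : p = q := by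
  cases p; cases q; cases hw; cases hpos; rfl

open Classical in
noncomputable def NimPos.ofGraph (G : SimpleGraph V) (x : V) : NimPos V :=
  ⟨fun u v => if G.Adj u v then 1 else 0, fun u v => by simp only [G.adj_comm], x⟩

namespace NimPos

open Classical in
@[simp]
theorem ofGraph_w (G : SimpleGraph V) (x u v : V) :
    (ofGraph G x).w u v = if G.Adj u v then 1 else 0 := rfl

@[simp]
theorem ofGraph_pos (G : SimpleGraph V) (x : V) : (ofGraph G x).pos = x := rfl

theorem ofGraph_w_eq_of_adj_iff {G G' : SimpleGraph V} {x x' u v : V}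
    (h : G.Adj u v ↔ G'.Adj u v) : (ofGraph G x).w u v = (ofGraph G' x').w u v := by
  simp only [ofGraph_w]
  split_ifs <;> tauto

theorem nimMove_ofGraph {G : SimpleGraph V} {x y : V} (h : G.Adj x y) :
    NimMove (ofGraph G x) (ofGraph (G.deleteEdges {s(x, y)}) y) := by
  refine ⟨h.ne, by simp [h], fun u v huv => ofGraph_w_eq_of_adj_iff ?_⟩
  have huv' : s(u, v) ≠ s(x, y) := by simpa [Sym2.eq_iff] using huv
  simp [huv']

theorem eq_ofGraph_of_nimMove {G : SimpleGraph V} {x : V} {q : NimPos V}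
    (h : NimMove (ofGraph G x) q) :
    G.Adj x q.pos ∧ q = ofGraph (G.deleteEdges {s(x, q.pos)}) q.pos := by
  obtain ⟨-, hlt, hrest⟩ := h
  have hadj : G.Adj x q.pos := by
    by_contra h
    simp [h] at hlt
  have hzero : q.w x q.pos = 0 := by simpa [hadj] using hlt
  have hzero' : q.w q.pos x = 0 := by rw [q.symm]; exact hzero
  refine ⟨hadj, NimPos.ext (funext₂ fun u v => ?_) rfl⟩
  by_cases huv : s(u, v) = s(x, q.pos)
  · rcases Sym2.eq_iff.mp huv with ⟨rfl, rfl⟩ | ⟨rfl, rfl⟩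
    · simp [hzero]
    · simp [hzero']
  · rw [hrest u v (by simpa [Sym2.eq_iff] using huv)]
    exact ofGraph_w_eq_of_adj_iff (by simp [huv])

end NimPos

/-- The board whenever the first player has just moved to `a` or `b`, `F` being the vertices the
piece has not visited yet. -/
def ssbGraph (a b : V) (F : Finset V) : SimpleGraph V :=
  SimpleGraph.fromRel fun u v => u ∈ F ∨ (u ≠ a ∧ u ≠ b ∧ v ≠ a ∧ v ≠ b)

theorem ssbGraph_adj_iff_mem {a b c : V} {F : Finset V} (haF : a ∉ F) (hbF : b ∉ F)
    (hc : c = a ∨ c = b) {y : V} : (ssbGraph a b F).Adj c y ↔ y ∈ F := by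
  rcases hc with rfl | rfl <;> simp [ssbGraph] <;> grind

variable [DecidableEq V]

section ssbGraph

variable {a b c z : V} {F : Finset V}

theorem deleteEdges_ssbGraph_adj_swap (hab : a ≠ b) (haF : a ∉ F) (hbF : b ∉ F)
    (hc : c = a ∨ c = b) (hz : z ∈ F) :
    ((ssbGraph a b F).deleteEdges {s(c, z)}).Adj z (Equiv.swap a b c) := by
  rcases hc with rfl | rfl <;> simp [ssbGraph] <;> grind

theorem deleteEdges_deleteEdges_ssbGraph (haF : a ∉ F) (hbF : b ∉ F) (hc : c = a ∨ c = b)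
    (hz : z ∈ F) :
    ((ssbGraph a b F).deleteEdges {s(c, z)}).deleteEdges {s(z, Equiv.swap a b c)} =
      ssbGraph a b (F.erase z) := by
  ext u v
  rcases hc with rfl | rfl <;> simp [ssbGraph] <;> grind

theorem top_deleteEdges_eq_ssbGraph [Fintype V] :
    (⊤ : SimpleGraph V).deleteEdges {s(a, b)} = ssbGraph a b {a, b}ᶜ := by
  ext u v
  simp [ssbGraph]
  grind

end ssbGraph

open NimPos in
/-- The SSB strategy from the moment the piece sits at `y` and the first player is about to return
along the edge `yc`. -/
theorem forcesVia_ssb {a b : V} (hab : a ≠ b) {S : V → Prop} (hSa : S a) (hSb : S b)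
    (F : Finset V) (haF : a ∉ F) (hbF : b ∉ F) {G : SimpleGraph V} {y c : V}
    (hc : c = a ∨ c = b) (hadj : G.Adj y c) (hG : G.deleteEdges {s(y, c)} = ssbGraph a b F) :
    ForcesVia S (if Even F.card then c else Equiv.swap a b c) (ofGraph G y) := by
  induction F using Finset.strongInduction generalizing G y c with
  | H F ih =>
  have hSc : S c := by rcases hc with rfl | rfl <;> assumption
  refine ForcesVia.step _ (ofGraph (ssbGraph a b F) c) hSc (hG ▸ nimMove_ofGraph hadj) ?_ ?_
  · intro hstuck
    have hF : F = ∅ := Finset.eq_empty_of_forall_notMem fun z hz =>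
      hstuck _ (nimMove_ofGraph ((ssbGraph_adj_iff_mem haF hbF hc).mpr hz))
    simp [hF]
  · intro r hr
    obtain ⟨hcz, hr⟩ := eq_ofGraph_of_nimMove hr
    have hz : r.pos ∈ F := (ssbGraph_adj_iff_mem haF hbF hc).mp hcz
    have hc' : Equiv.swap a b c = a ∨ Equiv.swap a b c = b := by
      rcases hc with rfl | rfl <;> simp
    have hrec := ih (F.erase r.pos) (Finset.erase_ssubset hz)
      (fun h => haF (Finset.mem_of_mem_erase h)) (fun h => hbF (Finset.mem_of_mem_erase h)) hc'
      (deleteEdges_ssbGraph_adj_swap hab haF hbF hc hz)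
      (deleteEdges_deleteEdges_ssbGraph haF hbF hc hz)
    obtain ⟨k, hk⟩ : ∃ k, F.card = k + 1 :=
      Nat.exists_eq_add_one.mpr (Finset.card_pos.mpr ⟨_, hz⟩)
    rw [hr]
    convert hrec using 1
    by_cases he : Even k <;> simp [Finset.card_erase_of_mem hz, hk, he, Nat.even_add_one]

theorem forcesVia_ofGraph_top [Fintype V] {a b : V} (hab : a ≠ b) {S : V → Prop} (hSa : S a)
    (hSb : S b) :
    ForcesVia S (if Even (Fintype.card V) then b else a) (NimPos.ofGraph ⊤ a) := by
  have hcard : ({a, b}ᶜ : Finset V).card = Fintype.card V - 2 := by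
    rw [Finset.card_compl, Finset.card_pair hab]
  have htwo : 2 ≤ Fintype.card V := by
    simpa [Finset.card_pair hab] using Finset.card_le_univ {a, b}
  convert forcesVia_ssb hab hSa hSb {a, b}ᶜ (by simp) (by simp) (Or.inr rfl) hab
    top_deleteEdges_eq_ssbGraph using 1
  rw [hcard, Equiv.swap_apply_right]
  simp [Nat.even_sub htwo]

/-- in Nim on `K_n` with all weights 1 starting at `v₁ = 0`, the
first player can force play to stay within the `SSB` subgraph on `v₁, v₂`
(always moving to `v₁ = 0` or `v₂ = 1`), exhausting the edges at `v₁, v₂` and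
stranding the second player at `v₂` if `n` is even and at `v₁` if `n` is odd. -/
theorem stmt12 (n : ℕ) (hn : 2 ≤ n) :
    ForcesVia (fun x : Fin n => x.val = 0 ∨ x.val = 1)
      (if Even n then (⟨1, by omega⟩ : Fin n) else (⟨0, by omega⟩ : Fin n))
      ⟨knW n, knW_symm n, ⟨0, by omega⟩⟩ := by
  have hstart : (⟨knW n, knW_symm n, ⟨0, by omega⟩⟩ : NimPos (Fin n)) =
      NimPos.ofGraph ⊤ ⟨0, by omega⟩ :=
    NimPos.ext (funext₂ fun u v => by simp [knW, Fin.val_ne_iff]) rfl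
  rw [hstart]
  simpa using forcesVia_ofGraph_top (S := fun x : Fin n => x.val = 0 ∨ x.val = 1)
    (a := ⟨0, by omega⟩) (b := ⟨1, by omega⟩) (by simp [Fin.ext_iff])
    (Or.inl rfl) (Or.inr rfl)
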